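/- Fix d ≥ 1, h > 0 and α > 0, and define the complex-valued kernel U^{α,h}_j(t) = ∏_{i=1}^d (1/h) e^{−2(α+i)t/h²} ∑_{k ≥ max(j_i,0)} ((α+i)t/h²)^{2k−j_i} / ((k−j_i)! k!) for j ∈ ℤ^d and t ≥ 0 (i the imaginary unit). Then each defining series converges absolutely, U^{α,h}_j(0) = h^{−d} if j = 0 and 0 otherwise, and for every t > 0 and j ∈ ℤ^d, d/dt U^{α,h}_j(t) = (α+i)(Δ^h U^{α,h}(t))_j; i.e. U^{α,h} is the fundamental solution of the d-dimensional discrete damped Schrödinger equation ∂_t v = (α+i) Δ^h v. -/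

import Mathlib

/-!
With `z = (α + i) t / h²`, the one-dimensional series is the modified Bessel function
`I_j(2z) = ∑_{k ≥ max(j,0)} z^{2k-j} / ((k-j)! k!)`. Splitting the exponent `2k - j` as
`(k - j) + k` in the termwise derivative gives `d/dz I_j(2z) = I_{j+1}(2z) + I_{j-1}(2z)`, and the
factor `e^{-2z}` supplies the `-2` of the second difference. Termwise differentiation is justified
by the bound `|z|^{2k-j} / ((k-j)! k!) ≤ M^{|j|} M^{2k} / k!` for `|z| ≤ M`, `1 ≤ M`. The
`d`-dimensional kernel is a product of one-dimensional ones, so the product rule turns the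
one-dimensional lattice equations into the `d`-dimensional one.
-/

noncomputable section

open Complex

/-- The `k`-th term of the series defining the one-dimensional discrete damped
Schrödinger kernel with damping `α`. -/
def Uterm (α h : ℝ) (j : ℤ) (t : ℝ) (k : ℕ) : ℂ :=
  if j ≤ (k : ℤ) then
    (((α : ℂ) + Complex.I) * (t : ℂ) / (h : ℂ) ^ 2) ^ (2 * (k : ℤ) - j).toNat /
      ((((k : ℤ) - j).toNat.factorial : ℂ) * (k.factorial : ℂ))
  else 0

/-- The one-dimensional discrete damped Schrödinger kernel. -/
def Uker1 (α h : ℝ) (j : ℤ) (t : ℝ) : ℂ :=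
  (1 / (h : ℂ)) * Complex.exp (-2 * ((α : ℂ) + Complex.I) * (t : ℂ) / (h : ℂ) ^ 2) *
    ∑' k : ℕ, Uterm α h j t k

/-- The `d`-dimensional discrete damped Schrödinger kernel
`U^{α,h}_j(t) = ∏_{i=1}^d U^{α,h}_{j_i}(t)`. -/
def Uker (α h : ℝ) {d : ℕ} (j : Fin d → ℤ) (t : ℝ) : ℂ :=
  ∏ i : Fin d, Uker1 α h (j i) t

/-- Unit lattice vector in direction `i`. -/
def gunit {d : ℕ} (i : Fin d) : Fin d → ℤ := fun k => if k = i then 1 else 0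

open Finset

theorem HasSum.shiftRight {G : Type*} [AddCommGroup G] [TopologicalSpace G]
    [IsTopologicalAddGroup G] {f : ℕ → G} {a : G} (hf : HasSum f a) :
    HasSum (fun k => if k = 0 then 0 else f (k - 1)) a :=
  (hasSum_nat_add_iff' 1).mp (by simpa using hf)

theorem prod_eq_mul_prod_erase_of_eq_of_ne {ι M : Type*} [Fintype ι] [DecidableEq ι]
    [CommMonoid M] {g g' : ι → M} {i : ι} (h : ∀ l ≠ i, g l = g' l) :
    ∏ l, g l = g i * ∏ l ∈ univ.erase i, g' l := by
  rw [← mul_prod_erase univ g (mem_univ i)]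
  exact congrArg _ (prod_congr rfl fun l hl => h l (ne_of_mem_erase hl))

def besselITerm (j : ℤ) (z : ℂ) (k : ℕ) : ℂ :=
  if j ≤ (k : ℤ) then
    z ^ (2 * (k : ℤ) - j).toNat / ((((k : ℤ) - j).toNat.factorial : ℂ) * (k.factorial : ℂ))
  else 0

theorem Uterm_eq_besselITerm (α h : ℝ) (j : ℤ) (t : ℝ) (k : ℕ) :
    Uterm α h j t k = besselITerm j (((α : ℂ) + I) * t / (h : ℂ) ^ 2) k :=
  rfl

section besselITerm

variable (j : ℤ) (z : ℂ) (k : ℕ)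

theorem norm_besselITerm_le {M : ℝ} (hM1 : 1 ≤ M) (hz : ‖z‖ ≤ M) :
    ‖besselITerm j z k‖ ≤ M ^ j.natAbs * ((M ^ 2) ^ k / k.factorial) := by
  rw [besselITerm]
  split_ifs with hjk
  · have hpow : ‖z‖ ^ (2 * (k : ℤ) - j).toNat ≤ M ^ (2 * k + j.natAbs) :=
      (pow_le_pow_left₀ (norm_nonneg z) hz _).trans (pow_le_pow_right₀ hM1 (by omega))
    have hfact : (k.factorial : ℝ) ≤ (((k : ℤ) - j).toNat.factorial : ℝ) * k.factorial :=
      le_mul_of_one_le_left (by positivity) (by exact_mod_cast Nat.factorial_pos _)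
    rw [norm_div, norm_pow, norm_mul, norm_natCast, norm_natCast]
    calc _ ≤ M ^ (2 * k + j.natAbs) / (k.factorial : ℝ) :=
          div_le_div₀ (by positivity) hpow (by positivity) hfact
      _ = M ^ j.natAbs * ((M ^ 2) ^ k / k.factorial) := by rw [pow_add, pow_mul]; ring
  · rw [norm_zero]; positivity

theorem summable_besselIMajorant (M : ℝ) :
    Summable fun k : ℕ => M ^ j.natAbs * ((M ^ 2) ^ k / k.factorial) :=
  (Real.summable_pow_div_factorial _).mul_left _

theorem summable_norm_besselITerm : Summable fun k => ‖besselITerm j z k‖ :=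
  .of_nonneg_of_le (fun _ => norm_nonneg _)
    (fun k => norm_besselITerm_le j z k (le_max_left 1 ‖z‖) (le_max_right 1 ‖z‖))
    (summable_besselIMajorant j _)

theorem summable_besselITerm : Summable fun k => besselITerm j z k :=
  (summable_norm_besselITerm j z).of_norm

theorem besselITerm_add_one_left (hjk : j ≤ k) :
    besselITerm (j + 1) z k = (((k : ℤ) - j).toNat : ℂ) * z ^ ((2 * (k : ℤ) - j).toNat - 1) /
      ((((k : ℤ) - j).toNat.factorial : ℂ) * k.factorial) := by
  rw [besselITerm]
  split_ifs with h
  · rw [show (2 * (k : ℤ) - (j + 1)).toNat = (2 * (k : ℤ) - j).toNat - 1 by omega,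
      show ((k : ℤ) - (j + 1)).toNat = ((k : ℤ) - j).toNat - 1 by omega,
      ← Nat.mul_factorial_pred (n := ((k : ℤ) - j).toNat) (by omega), Nat.cast_mul, mul_assoc,
      mul_div_mul_left _ _ (by norm_cast; omega)]
  · rw [show ((k : ℤ) - j).toNat = 0 by omega]
    simp

theorem besselITerm_sub_one_left_pred (hjk : j ≤ k) :
    (if k = 0 then 0 else besselITerm (j - 1) z (k - 1)) = (k : ℂ) *
      z ^ ((2 * (k : ℤ) - j).toNat - 1) / ((((k : ℤ) - j).toNat.factorial : ℂ) * k.factorial) := by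
  split_ifs with hk
  · simp [hk]
  · rw [besselITerm, if_pos (by omega),
      show (2 * ((k - 1 : ℕ) : ℤ) - (j - 1)).toNat = (2 * (k : ℤ) - j).toNat - 1 by omega,
      show (((k - 1 : ℕ) : ℤ) - (j - 1)).toNat = ((k : ℤ) - j).toNat by omega,
      ← Nat.mul_factorial_pred hk, Nat.cast_mul, mul_left_comm,
      mul_div_mul_left _ _ (by exact_mod_cast hk)]

theorem hasDerivAt_besselITerm :
    HasDerivAt (fun w => besselITerm j w k)
      (besselITerm (j + 1) z k + if k = 0 then 0 else besselITerm (j - 1) z (k - 1)) z := by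
  by_cases hjk : j ≤ k
  · have hterm : (fun w => besselITerm j w k) = fun w => w ^ (2 * (k : ℤ) - j).toNat /
        ((((k : ℤ) - j).toNat.factorial : ℂ) * k.factorial) := funext fun w => if_pos hjk
    rw [hterm]
    refine ((hasDerivAt_pow _ z).div_const _).congr_deriv ?_
    rw [besselITerm_add_one_left j z k hjk, besselITerm_sub_one_left_pred j z k hjk,
      ← add_div, ← add_mul, ← Nat.cast_add]
    congr 4
    omega
  · have hzero : ∀ n (m : ℕ) w, (m : ℤ) < n → besselITerm n w m = 0 :=
      fun _ _ _ h => if_neg (not_le.mpr h)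
    have hshift : (if k = 0 then 0 else besselITerm (j - 1) z (k - 1)) = 0 := by
      split_ifs
      · rfl
      · exact hzero _ _ _ (by omega)
    rw [show (fun w => besselITerm j w k) = fun _ => 0 from funext fun w => hzero j k w (by omega),
      hzero (j + 1) k z (by omega), hshift, add_zero]
    exact hasDerivAt_const z 0

theorem hasDerivAt_tsum_besselITerm :
    HasDerivAt (fun w => ∑' k, besselITerm j w k)
      ((∑' k, besselITerm (j + 1) z k) + ∑' k, besselITerm (j - 1) z k) z := by
  set M := ‖z‖ + 1
  have hM1 : 1 ≤ M := le_add_of_nonneg_left (norm_nonneg z)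
  have hz : z ∈ Metric.ball (0 : ℂ) M := mem_ball_zero_iff.mpr (lt_add_one _)
  have hbound : ∀ k, ∀ w ∈ Metric.ball (0 : ℂ) M,
      ‖besselITerm (j + 1) w k + if k = 0 then 0 else besselITerm (j - 1) w (k - 1)‖ ≤
        M ^ (j + 1).natAbs * ((M ^ 2) ^ k / k.factorial) +
          if k = 0 then 0 else M ^ (j - 1).natAbs * ((M ^ 2) ^ (k - 1) / (k - 1).factorial) := by
    intro k w hw
    have hwM := (mem_ball_zero_iff.mp hw).le
    refine (norm_add_le _ _).trans (add_le_add (norm_besselITerm_le _ _ _ hM1 hwM) ?_)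
    split_ifs
    · rw [norm_zero]
    · exact norm_besselITerm_le _ _ _ hM1 hwM
  have hsum_pred := (summable_besselITerm (j - 1) z).hasSum.shiftRight
  have H := hasDerivAt_tsum_of_isPreconnected
    ((summable_besselIMajorant _ M).add (summable_besselIMajorant _ M).hasSum.shiftRight.summable)
    Metric.isOpen_ball (convex_ball (0 : ℂ) M).isPreconnected
    (fun k w _ => hasDerivAt_besselITerm j w k) hbound hz (summable_besselITerm j z) hz
  rwa [(summable_besselITerm (j + 1) z).tsum_add hsum_pred.summable, hsum_pred.tsum_eq] at H

end besselITerm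

theorem tsum_besselITerm_zero (j : ℤ) :
    ∑' k, besselITerm j 0 k = if j = 0 then 1 else 0 := by
  rw [tsum_eq_single 0 fun k hk => ?_]
  · rcases lt_trichotomy j 0 with hj | rfl | hj
    · rw [besselITerm, if_pos (by omega), zero_pow (by omega), zero_div, if_neg hj.ne]
    · simp [besselITerm]
    · rw [besselITerm, if_neg (by omega), if_neg hj.ne']
  · unfold besselITerm
    split_ifs
    · rw [zero_pow (by omega), zero_div]
    · rfl

def latticeHeatKernel (c : ℂ) (n : ℤ) (t : ℝ) : ℂ :=
  exp (-2 * (c * t)) * ∑' k, besselITerm n (c * t) k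

theorem latticeHeatKernel_zero (c : ℂ) (n : ℤ) :
    latticeHeatKernel c n 0 = if n = 0 then 1 else 0 := by
  simp [latticeHeatKernel, tsum_besselITerm_zero]

theorem hasDerivAt_latticeHeatKernel (c : ℂ) (n : ℤ) (t : ℝ) :
    HasDerivAt (latticeHeatKernel c n)
      (c * (latticeHeatKernel c (n + 1) t - 2 * latticeHeatKernel c n t +
        latticeHeatKernel c (n - 1) t)) t := by
  have hlin : HasDerivAt (fun w : ℂ => c * w) c t := by
    simpa using (hasDerivAt_id (t : ℂ)).const_mul c
  have hexp := ((hlin.const_mul (-2)).cexp).comp_ofReal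
  have hseries := ((hasDerivAt_tsum_besselITerm n (c * t)).comp (t : ℂ) hlin).comp_ofReal
  refine (hexp.fun_mul hseries).congr_deriv ?_
  simp only [latticeHeatKernel, Function.comp_apply]
  ring

theorem Uker1_eq_latticeHeatKernel (α h : ℝ) (n : ℤ) :
    Uker1 α h n = fun t => 1 / (h : ℂ) * latticeHeatKernel (((α : ℂ) + I) / (h : ℂ) ^ 2) n t := by
  ext t
  have harg : ((α : ℂ) + I) * t / (h : ℂ) ^ 2 = ((α : ℂ) + I) / (h : ℂ) ^ 2 * t := by ring
  rw [Uker1, latticeHeatKernel, mul_assoc]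
  congr 2
  · congr 1
    ring
  · simp only [Uterm_eq_besselITerm, harg]

theorem Uker1_zero (α h : ℝ) (n : ℤ) : Uker1 α h n 0 = if n = 0 then 1 / (h : ℂ) else 0 := by
  simp [Uker1_eq_latticeHeatKernel, latticeHeatKernel_zero]

theorem hasDerivAt_Uker1 (α h : ℝ) (n : ℤ) (t : ℝ) :
    HasDerivAt (Uker1 α h n)
      (((α : ℂ) + I) / (h : ℂ) ^ 2 *
        (Uker1 α h (n + 1) t - 2 * Uker1 α h n t + Uker1 α h (n - 1) t)) t := by
  simp only [Uker1_eq_latticeHeatKernel]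
  exact ((hasDerivAt_latticeHeatKernel _ n t).const_mul _).congr_deriv (by ring)

theorem hasDerivAt_prod_of_discreteHeat {𝕜 𝔸 : Type*} [NontriviallyNormedField 𝕜]
    [NormedCommRing 𝔸] [NormedAlgebra 𝕜 𝔸] {d : ℕ} {f : ℤ → 𝕜 → 𝔸} {c : 𝔸} {t : 𝕜}
    (hf : ∀ n, HasDerivAt (f n) (c * (f (n + 1) t - 2 * f n t + f (n - 1) t)) t)
    (j : Fin d → ℤ) :
    HasDerivAt (fun s => ∏ i, f (j i) s)
      (c * ∑ i, ((∏ l, f ((j + gunit i : Fin d → ℤ) l) t) - 2 * ∏ l, f (j l) t +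
        ∏ l, f ((j - gunit i : Fin d → ℤ) l) t)) t := by
  refine (HasDerivAt.fun_finsetProd fun i _ => hf (j i)).congr_deriv ?_
  rw [mul_sum]
  refine sum_congr rfl fun i _ => ?_
  have hshift : ∀ v : Fin d → ℤ, (∀ l ≠ i, v l = j l) →
      ∏ l, f (v l) t = f (v i) t * ∏ l ∈ univ.erase i, f (j l) t :=
    fun v hv => prod_eq_mul_prod_erase_of_eq_of_ne fun l hl => by rw [hv l hl]
  rw [hshift (j + gunit i) fun l hl => by simp [gunit, hl],
    hshift (j - gunit i) fun l hl => by simp [gunit, hl], ← mul_prod_erase univ _ (mem_univ i)]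
  simp only [gunit, Pi.add_apply, Pi.sub_apply, if_pos, smul_eq_mul]
  ring

theorem discrete_damped_schrodinger_kernel_fundamental_general
    (d : ℕ) (h α : ℝ) :
    (∀ (j : ℤ) (t : ℝ), 0 ≤ t → Summable fun k : ℕ => ‖Uterm α h j t k‖) ∧
    (∀ j : Fin d → ℤ, Uker α h j 0 = if j = 0 then (1 : ℂ) / (h : ℂ) ^ d else 0) ∧
    (∀ (j : Fin d → ℤ) (t : ℝ), 0 < t →
      HasDerivAt (fun s => Uker α h j s)
        (((α : ℂ) + Complex.I) *
          ∑ i : Fin d,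
            (Uker α h (j + gunit i) t - 2 * Uker α h j t + Uker α h (j - gunit i) t) /
              (h : ℂ) ^ 2)
        t) := by
  refine ⟨fun j t _ => summable_norm_besselITerm j _, fun j => ?_, fun j t _ => ?_⟩
  · simp only [Uker, Uker1_zero, prod_ite_zero, mem_univ, true_implies, prod_const, card_univ,
      Fintype.card_fin, div_pow, one_pow, funext_iff, Pi.zero_apply]
  · refine (hasDerivAt_prod_of_discreteHeat (fun n => hasDerivAt_Uker1 α h n t) j).congr_deriv ?_
    simp only [Uker, mul_sum, div_eq_mul_inv]
    refine sum_congr rfl fun i _ => ?_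
    ring

/-- `U^{α,h}` is the fundamental solution of the `d`-dimensional
discrete damped Schrödinger equation `∂_t v = (α+i) Δ^h v`: the defining series
converge absolutely, the initial value is `h^{−d}δ`, and for `t > 0`,
`d/dt U^{α,h}_j(t) = (α+i)(Δ^h U^{α,h}(t))_j`. -/
theorem discrete_damped_schrodinger_kernel_fundamental
    (d : ℕ) (hd : 1 ≤ d) (h α : ℝ) (hh : 0 < h) (hα : 0 < α) :
    (∀ (j : ℤ) (t : ℝ), 0 ≤ t → Summable fun k : ℕ => ‖Uterm α h j t k‖) ∧
    (∀ j : Fin d → ℤ, Uker α h j 0 = if j = 0 then (1 : ℂ) / (h : ℂ) ^ d else 0) ∧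
    (∀ (j : Fin d → ℤ) (t : ℝ), 0 < t →
      HasDerivAt (fun s => Uker α h j s)
        (((α : ℂ) + Complex.I) *
          ∑ i : Fin d,
            (Uker α h (j + gunit i) t - 2 * Uker α h j t + Uker α h (j - gunit i) t) /
              (h : ℂ) ^ 2)
        t) :=
  discrete_damped_schrodinger_kernel_fundamental_general d h α
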